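/- arXiv:1509.08262 — 2 statements merged into one kernel-verified Lean document; each statement's English description precedes it below -/
import Mathlib

section
/- Let X and Y be independent exponential random variables with means m_x > 0 and m_y > 0, and define E₁(a) = ∫_a^∞ (exp(−t)/t) dt for a > 0. If m_x ≠ m_y, then E[ln(1 + X/(Y + 1))] = ( m_x/(m_x − m_y) )·( exp(1/m_x)·E₁(1/m_x) − exp(1/m_y)·E₁(1/m_y) ). If m_x = m_y, then E[ln(1 + X/(Y + 1))] = 1 − (1/m_x)·exp(1/m_x)·E₁(1/m_x). -/
/-!
Condition on `Y = y`. For `X ~ Exp(a)` and `s > 0`, integration by parts gives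
`E[ln(1 + X/s)] = ∫₀^∞ e^{-ax}/(x + s) dx = φ(as)`, where `φ(u) = e^u E₁(u)`.
Since `φ' = φ - 1/u` and `0 ≤ φ(u) ≤ 1/u`, the outer integral `∫₀^∞ φ(a(y+1)) b e^{-by} dy`
has the explicit antiderivatives `b/(a-b) · e^{-by} (φ(a(y+1)) - φ(b(y+1)))` for `a ≠ b` and
`e^{-ay} (a(y+1) φ(a(y+1)) - 1)` for `a = b`. All integrands are nonnegative, so the improper
fundamental theorem of calculus also provides their integrability.
-/

open MeasureTheory ProbabilityTheory Real Set Filter Topology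

lemma tendsto_exp_neg_mul_atTop {c : ℝ} (hc : 0 < c) :
    Tendsto (fun x => exp (-(c * x))) atTop (𝓝 0) :=
  tendsto_exp_neg_atTop_nhds_zero.comp (tendsto_id.const_mul_atTop hc)

lemma hasDerivAt_exp_neg_mul (c x : ℝ) :
    HasDerivAt (fun x => exp (-(c * x))) (exp (-(c * x)) * -c) x := by
  simpa using ((hasDerivAt_id x).const_mul c).neg.exp

noncomputable def E1 (a : ℝ) : ℝ := ∫ t in Ioi a, exp (-t) / t

lemma exp_neg_div_le {a t : ℝ} (ha : 0 < a) (hat : a ≤ t) : exp (-t) / t ≤ a⁻¹ * exp (-t) := by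
  rw [div_eq_inv_mul]
  gcongr

lemma integrableOn_exp_neg_div {a : ℝ} (ha : 0 < a) :
    IntegrableOn (fun t => exp (-t) / t) (Ioi a) := by
  refine ((integrableOn_exp_neg_Ioi a).const_mul a⁻¹).mono'
    (by fun_prop : Measurable fun t : ℝ => exp (-t) / t).aestronglyMeasurable ?_
  filter_upwards [ae_restrict_mem measurableSet_Ioi] with t (ht : a < t)
  rw [norm_of_nonneg (div_nonneg (exp_pos _).le (ha.trans ht).le)]
  exact exp_neg_div_le ha ht.le

lemma E1_nonneg {a : ℝ} (ha : 0 < a) : 0 ≤ E1 a :=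
  setIntegral_nonneg measurableSet_Ioi fun _ ht => div_nonneg (exp_pos _).le (ha.trans ht).le

lemma E1_le {a : ℝ} (ha : 0 < a) : E1 a ≤ a⁻¹ * exp (-a) := by
  calc E1 a ≤ ∫ t in Ioi a, a⁻¹ * exp (-t) :=
        setIntegral_mono_on (integrableOn_exp_neg_div ha)
          ((integrableOn_exp_neg_Ioi a).const_mul a⁻¹) measurableSet_Ioi
          fun _ ht => exp_neg_div_le ha ht.le
    _ = a⁻¹ * exp (-a) := by rw [integral_const_mul, integral_exp_neg_Ioi]

lemma hasDerivAt_E1 {a : ℝ} (ha : 0 < a) : HasDerivAt E1 (-(exp (-a) / a)) a := by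
  have hloc : (fun x => (∫ t in x..a, exp (-t) / t) + E1 a) =ᶠ[𝓝 a] E1 := by
    filter_upwards [Ioi_mem_nhds ha] with x hx
    rw [← intervalIntegral.integral_Ioi_sub_Ioi' (integrableOn_exp_neg_div hx)
      (integrableOn_exp_neg_div ha), E1, E1, sub_add_cancel]
  refine (HasDerivAt.add_const _ ?_).congr_of_eventuallyEq hloc.symm
  have hmeas : Measurable fun t : ℝ => exp (-t) / t := by fun_prop
  exact intervalIntegral.integral_hasDerivAt_left IntervalIntegrable.refl
    hmeas.stronglyMeasurable.stronglyMeasurableAtFilter (by fun_prop (disch := exact ha.ne'))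

noncomputable def expMulE1 (a : ℝ) : ℝ := exp a * E1 a

lemma expMulE1_nonneg {a : ℝ} (ha : 0 < a) : 0 ≤ expMulE1 a :=
  mul_nonneg (exp_pos a).le (E1_nonneg ha)

lemma expMulE1_le {a : ℝ} (ha : 0 < a) : expMulE1 a ≤ a⁻¹ := by
  calc expMulE1 a ≤ exp a * (a⁻¹ * exp (-a)) := by unfold expMulE1; gcongr; exact E1_le ha
    _ = a⁻¹ := by rw [mul_left_comm, ← exp_add, add_neg_cancel, exp_zero, mul_one]

lemma hasDerivAt_expMulE1 {a : ℝ} (ha : 0 < a) :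
    HasDerivAt expMulE1 (expMulE1 a - a⁻¹) a := by
  refine ((hasDerivAt_exp a).mul (hasDerivAt_E1 ha)).congr_deriv ?_
  rw [expMulE1, mul_neg, mul_div, ← exp_add, add_neg_cancel, exp_zero]
  ring

lemma tendsto_expMulE1_atTop : Tendsto expMulE1 atTop (𝓝 0) := by
  refine tendsto_of_tendsto_of_tendsto_of_le_of_le' tendsto_const_nhds tendsto_inv_atTop_zero ?_ ?_
  · filter_upwards [eventually_gt_atTop 0] with a ha using expMulE1_nonneg ha
  · filter_upwards [eventually_gt_atTop 0] with a ha using expMulE1_le ha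

lemma hasDerivAt_expMulE1_mul_add {c s x : ℝ} (hc : 0 < c) (hxs : 0 < x + s) :
    HasDerivAt (fun x => expMulE1 (c * (x + s)))
      ((expMulE1 (c * (x + s)) - (c * (x + s))⁻¹) * c) x := by
  refine (hasDerivAt_expMulE1 (by positivity)).comp x ?_
  simpa using ((hasDerivAt_id x).add_const s).const_mul c

lemma integral_log_one_add_div_mul_exp {r s : ℝ} (hr : 0 < r) (hs : 0 < s) :
    ∫ x in Ioi 0, log (1 + x / s) * (r * exp (-(r * x))) = expMulE1 (r * s) := by
  set F : ℝ → ℝ := fun x => -(exp (-(r * x)) * (log (1 + x / s) + expMulE1 (r * (x + s))))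
  have hderiv : ∀ x ∈ Ici (0 : ℝ), HasDerivAt F (log (1 + x / s) * (r * exp (-(r * x)))) x := by
    intro x (hx : 0 ≤ x)
    have hxs : 0 < x + s := by linarith
    have hlog : HasDerivAt (fun x => log (1 + x / s)) ((x + s)⁻¹) x := by
      convert (((hasDerivAt_id' x).div_const s).const_add 1).log (by positivity) using 1
      field_simp
      ring
    refine ((hasDerivAt_exp_neg_mul r x).mul
      (hlog.add (hasDerivAt_expMulE1_mul_add hr hxs))).neg.congr_deriv ?_
    simp only [Pi.add_apply]
    field_simp
    ring
  have hpos : ∀ x ∈ Ioi (0 : ℝ), 0 ≤ log (1 + x / s) * (r * exp (-(r * x))) := by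
    intro x (hx : 0 < x)
    have : 0 ≤ x / s := by positivity
    exact mul_nonneg (log_nonneg (by linarith)) (by positivity)
  have hlim : Tendsto F atTop (𝓝 0) := by
    have hbound : Tendsto (fun x => s⁻¹ * (x * exp (-(r * x))) + (r * s)⁻¹ * exp (-(r * x)))
        atTop (𝓝 0) := by
      have h1 := tendsto_rpow_mul_exp_neg_mul_atTop_nhds_zero 1 r hr
      simp only [rpow_one, neg_mul] at h1
      simpa using (h1.const_mul s⁻¹).add ((tendsto_exp_neg_mul_atTop hr).const_mul (r * s)⁻¹)
    refine squeeze_zero_norm' ?_ hbound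
    filter_upwards [eventually_ge_atTop 0] with x hx
    have hxs : 0 ≤ x / s := by positivity
    have hlog0 : 0 ≤ log (1 + x / s) := log_nonneg (by linarith)
    have hlog : log (1 + x / s) ≤ x / s := by
      linarith [log_le_sub_one_of_pos (show 0 < 1 + x / s by positivity)]
    have hE : expMulE1 (r * (x + s)) ≤ (r * s)⁻¹ :=
      (expMulE1_le (by positivity)).trans (inv_anti₀ (by positivity) (by nlinarith))
    have hE0 := expMulE1_nonneg (show 0 < r * (x + s) by positivity)
    rw [norm_neg, norm_of_nonneg (by positivity)]
    calc exp (-(r * x)) * (log (1 + x / s) + expMulE1 (r * (x + s)))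
        ≤ exp (-(r * x)) * (x / s + (r * s)⁻¹) := by gcongr
      _ = _ := by ring
  rw [integral_Ioi_of_hasDerivAt_of_nonneg' hderiv hpos hlim]
  simp [F]

lemma integral_expMulE1_mul_exp_of_ne {a b : ℝ} (ha : 0 < a) (hb : 0 < b) (hab : a ≠ b) :
    ∫ y in Ioi 0, expMulE1 (a * (y + 1)) * (b * exp (-(b * y)))
      = b / (b - a) * (expMulE1 a - expMulE1 b) := by
  have hab' : a - b ≠ 0 := sub_ne_zero.mpr hab
  have hba : b - a ≠ 0 := sub_ne_zero.mpr hab.symm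
  set A : ℝ → ℝ := fun y =>
    b / (a - b) * (exp (-(b * y)) * (expMulE1 (a * (y + 1)) - expMulE1 (b * (y + 1))))
  have hderiv : ∀ y ∈ Ici (0 : ℝ),
      HasDerivAt A (expMulE1 (a * (y + 1)) * (b * exp (-(b * y)))) y := by
    intro y (hy : 0 ≤ y)
    have hy1 : 0 < y + 1 := by linarith
    refine (((hasDerivAt_exp_neg_mul b y).mul ((hasDerivAt_expMulE1_mul_add ha hy1).sub
      (hasDerivAt_expMulE1_mul_add hb hy1))).const_mul _).congr_deriv ?_
    simp only [Pi.sub_apply]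
    field_simp
    ring
  have hpos : ∀ y ∈ Ioi (0 : ℝ), 0 ≤ expMulE1 (a * (y + 1)) * (b * exp (-(b * y))) :=
    fun y (hy : 0 < y) => mul_nonneg (expMulE1_nonneg (by positivity)) (by positivity)
  have hlim : Tendsto A atTop (𝓝 0) := by
    have hin : ∀ {c}, 0 < c → Tendsto (fun y : ℝ => c * (y + 1)) atTop atTop := fun hc =>
      (tendsto_atTop_add_const_right _ 1 tendsto_id).const_mul_atTop hc
    simpa using ((tendsto_exp_neg_mul_atTop hb).mul ((tendsto_expMulE1_atTop.comp (hin ha)).sub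
      (tendsto_expMulE1_atTop.comp (hin hb)))).const_mul (b / (a - b))
  rw [integral_Ioi_of_hasDerivAt_of_nonneg' hderiv hpos hlim]
  simp only [A, mul_zero, neg_zero, exp_zero, zero_add, mul_one, one_mul]
  field_simp
  ring

lemma integral_expMulE1_mul_exp {a : ℝ} (ha : 0 < a) :
    ∫ y in Ioi 0, expMulE1 (a * (y + 1)) * (a * exp (-(a * y))) = 1 - a * expMulE1 a := by
  set A : ℝ → ℝ := fun y => exp (-(a * y)) * (a * (y + 1) * expMulE1 (a * (y + 1)) - 1)
  have hderiv : ∀ y ∈ Ici (0 : ℝ),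
      HasDerivAt A (expMulE1 (a * (y + 1)) * (a * exp (-(a * y)))) y := by
    intro y (hy : 0 ≤ y)
    have hy1 : 0 < y + 1 := by linarith
    have hlin : HasDerivAt (fun y => a * (y + 1)) a y := by
      simpa using ((hasDerivAt_id y).add_const 1).const_mul a
    refine ((hasDerivAt_exp_neg_mul a y).mul
      ((hlin.mul (hasDerivAt_expMulE1_mul_add ha hy1)).sub_const 1)).congr_deriv ?_
    simp only [Pi.mul_apply]
    field_simp
    ring
  have hpos : ∀ y ∈ Ioi (0 : ℝ), 0 ≤ expMulE1 (a * (y + 1)) * (a * exp (-(a * y))) :=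
    fun y (hy : 0 < y) => mul_nonneg (expMulE1_nonneg (by positivity)) (by positivity)
  have hlim : Tendsto A atTop (𝓝 0) := by
    refine squeeze_zero_norm' ?_ (tendsto_exp_neg_mul_atTop ha)
    filter_upwards [eventually_ge_atTop 0] with y hy
    have hay : 0 < a * (y + 1) := by positivity
    have h0 : 0 ≤ a * (y + 1) * expMulE1 (a * (y + 1)) := mul_nonneg hay.le (expMulE1_nonneg hay)
    have h1 : a * (y + 1) * expMulE1 (a * (y + 1)) ≤ 1 :=
      (mul_le_mul_of_nonneg_left (expMulE1_le hay) hay.le).trans (mul_inv_cancel₀ hay.ne').le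
    rw [norm_mul, norm_of_nonneg (exp_pos _).le]
    refine mul_le_of_le_one_right (exp_pos _).le ?_
    rw [norm_eq_abs, abs_le]
    constructor <;> linarith
  rw [integral_Ioi_of_hasDerivAt_of_nonneg' hderiv hpos hlim]
  simp [A]

lemma expMeasure_eq_withDensity (r : ℝ) :
    expMeasure r = (volume.restrict (Ioi 0)).withDensity
      (fun x => ENNReal.ofReal (r * exp (-(r * x)))) := by
  rw [Measure.restrict_congr_set Ioi_ae_eq_Ici, ← withDensity_indicator measurableSet_Ici]
  change volume.withDensity (exponentialPDF r) = _
  congr 1 with x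
  by_cases hx : 0 ≤ x
  · simp [hx, exponentialPDF_of_nonneg]
  · simp [hx, exponentialPDF_of_neg (not_le.mp hx)]

lemma integral_expMeasure {r : ℝ} (hr : 0 < r) (f : ℝ → ℝ) :
    ∫ x, f x ∂expMeasure r = ∫ x in Ioi 0, f x * (r * exp (-(r * x))) := by
  rw [expMeasure_eq_withDensity, integral_withDensity_eq_integral_toReal_smul (by fun_prop)
    (ae_of_all _ fun _ => ENNReal.ofReal_lt_top)]
  simp_rw [ENNReal.toReal_ofReal (by positivity : 0 ≤ r * exp (-(r * _))), smul_eq_mul, mul_comm]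

lemma ae_nonneg_expMeasure (r : ℝ) : ∀ᵐ x ∂expMeasure r, 0 ≤ x := by
  rw [expMeasure_eq_withDensity]
  exact (withDensity_absolutelyContinuous _ _).ae_le
    ((ae_restrict_mem measurableSet_Ioi).mono fun _ hx => le_of_lt hx)

lemma integrable_id_expMeasure {r : ℝ} (hr : 0 < r) : Integrable id (expMeasure r) := by
  rw [expMeasure_eq_withDensity, integrable_withDensity_iff (by fun_prop)
    (ae_of_all _ fun _ => ENNReal.ofReal_lt_top)]
  have h : IntegrableOn (fun x => r * (x ^ (1 : ℝ) * exp (-r * x ^ (1 : ℝ)))) (Ioi 0) :=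
    (integrableOn_rpow_mul_exp_neg_mul_rpow (by norm_num) one_pos hr).const_mul r
  refine h.congr_fun (fun x (hx : 0 < x) => ?_) measurableSet_Ioi
  simp only [rpow_one, id, ENNReal.toReal_ofReal (by positivity : 0 ≤ r * exp (-(r * x)))]
  ring_nf

lemma ProbabilityTheory.IndepFun.integral_comp_eq_integral_integral {Ω α β E : Type*}
    [MeasurableSpace Ω] [MeasurableSpace α] [MeasurableSpace β]
    [NormedAddCommGroup E] [NormedSpace ℝ E]
    {μ : Measure Ω} [IsFiniteMeasure μ] {X : Ω → α} {Y : Ω → β}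
    (hX : AEMeasurable X μ) (hY : AEMeasurable Y μ) (hXY : IndepFun X Y μ) {f : α × β → E}
    (hf : Integrable f ((μ.map X).prod (μ.map Y))) :
    ∫ ω, f (X ω, Y ω) ∂μ = ∫ y, ∫ x, f (x, y) ∂μ.map X ∂μ.map Y := by
  rw [← integral_prod_symm f hf, ← hXY.map_prod_eq_prod_map_map hX hY,
    integral_map (hX.prodMk hY)]
  rw [← hXY.map_prod_eq_prod_map_map hX hY] at hf
  exact hf.aestronglyMeasurable

lemma integrable_log_one_add_div_add_one {a b : ℝ} (ha : 0 < a) (hb : 0 < b) :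
    Integrable (fun p : ℝ × ℝ => log (1 + p.1 / (p.2 + 1)))
      ((expMeasure a).prod (expMeasure b)) := by
  have hfst : ∀ᵐ p ∂(expMeasure a).prod (expMeasure b), 0 ≤ p.1 :=
    Measure.quasiMeasurePreserving_fst.ae (ae_nonneg_expMeasure a)
  have hsnd : ∀ᵐ p ∂(expMeasure a).prod (expMeasure b), 0 ≤ p.2 :=
    Measure.quasiMeasurePreserving_snd.ae (ae_nonneg_expMeasure b)
  have := isProbabilityMeasure_expMeasure hb
  refine ((integrable_id_expMeasure ha).comp_fst _).mono'
    (by fun_prop : Measurable fun p : ℝ × ℝ => log (1 + p.1 / (p.2 + 1))).aestronglyMeasurable ?_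
  filter_upwards [hfst, hsnd] with p hx hy
  have hxy : 0 ≤ p.1 / (p.2 + 1) := by positivity
  rw [norm_of_nonneg (log_nonneg (by linarith))]
  calc log (1 + p.1 / (p.2 + 1)) ≤ p.1 / (p.2 + 1) := by
        linarith [log_le_sub_one_of_pos (show 0 < 1 + p.1 / (p.2 + 1) by positivity)]
    _ ≤ p.1 := div_le_self hx (by linarith)

lemma integral_log_one_add_div_add_one_of_indepFun {Ω : Type*} [MeasurableSpace Ω]
    {μ : Measure Ω} [IsProbabilityMeasure μ] {X Y : Ω → ℝ} (hX : Measurable X) (hY : Measurable Y)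
    (hXY : IndepFun X Y μ) {a b : ℝ} (ha : 0 < a) (hb : 0 < b)
    (hXa : μ.map X = expMeasure a) (hYb : μ.map Y = expMeasure b) :
    ∫ ω, log (1 + X ω / (Y ω + 1)) ∂μ
      = ∫ y in Ioi 0, expMulE1 (a * (y + 1)) * (b * exp (-(b * y))) := by
  have hf := integrable_log_one_add_div_add_one ha hb
  rw [← hXa, ← hYb] at hf
  rw [hXY.integral_comp_eq_integral_integral hX.aemeasurable hY.aemeasurable hf, hXa, hYb,
    integral_expMeasure hb]
  refine setIntegral_congr_fun measurableSet_Ioi fun y (hy : 0 < y) => ?_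
  rw [integral_expMeasure ha]
  exact congrArg (· * _) (integral_log_one_add_div_mul_exp ha (show 0 < y + 1 by positivity))

/-- **`T₂ = E[ln(1 + X/(Y+1))]` for independent exponentials (eq. (26)).**
If `m_x ≠ m_y` then `T₂ = (m_x/(m_x - m_y))(e^{1/m_x}E₁(1/m_x) - e^{1/m_y}E₁(1/m_y))`;
if `m_x = m_y` then `T₂ = 1 - (1/m_x) e^{1/m_x} E₁(1/m_x)`, where
`E₁(a) = ∫_a^∞ e^{-t}/t dt`. -/
theorem T2_ergodic_eavesdropping_rate
    {Ω : Type*} [MeasurableSpace Ω] (μ : Measure Ω) [IsProbabilityMeasure μ]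
    (X Y : Ω → ℝ) (hXm : Measurable X) (hYm : Measurable Y)
    (hindep : IndepFun X Y μ)
    (mx my : ℝ) (hmx : 0 < mx) (hmy : 0 < my)
    (hX : Measure.map X μ = expMeasure mx⁻¹)
    (hY : Measure.map Y μ = expMeasure my⁻¹)
    (E₁ : ℝ → ℝ) (hE₁ : ∀ a, 0 < a → E₁ a = ∫ t in Set.Ioi a, Real.exp (-t) / t) :
    (mx ≠ my →
      (∫ ω, Real.log (1 + X ω / (Y ω + 1)) ∂μ) =
        (mx / (mx - my)) * (Real.exp (1 / mx) * E₁ (1 / mx)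
          - Real.exp (1 / my) * E₁ (1 / my))) ∧
    (mx = my →
      (∫ ω, Real.log (1 + X ω / (Y ω + 1)) ∂μ) =
        1 - (1 / mx) * Real.exp (1 / mx) * E₁ (1 / mx)) := by
  have hE : ∀ m, 0 < m → exp (1 / m) * E₁ (1 / m) = expMulE1 m⁻¹ := fun m hm => by
    rw [hE₁ _ (by positivity), one_div]
    rfl
  have hT := integral_log_one_add_div_add_one_of_indepFun hXm hYm hindep
    (inv_pos.2 hmx) (inv_pos.2 hmy) hX hY
  refine ⟨fun hne => ?_, fun heq => ?_⟩
  · rw [hT, integral_expMulE1_mul_exp_of_ne (inv_pos.2 hmx) (inv_pos.2 hmy)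
      (inv_injective.ne hne), hE mx hmx, hE my hmy]
    congr 1
    have : mx - my ≠ 0 := sub_ne_zero.mpr hne
    field_simp
  · subst heq
    rw [hT, integral_expMulE1_mul_exp (inv_pos.2 hmx), mul_assoc, hE mx hmx, one_div]
end

section
/- Let P > 0, N₀ > 0, η ∈ (0,1], α ∈ (0,1), δ > 1, and let X and W be independent exponential random variables with means λ_SR > 0 and λ_RD > 0. Define ν(x) = 2ηαPx/(N₀(2ηαx + (1−α))) − Pδ/(Px + N₀) and θ₁ = [ (δ−1) + √( (δ−1)² + 4δ·P(1−α)/(2ηαN₀) ) ] / (2P/N₀). Then the secrecy outage probability of the TS policy satisfies ℙ( (1 + 2ηαP·X·W/(N₀(2ηαW + (1−α)))) / (1 + P·X/(P·W + N₀)) < δ ) = 1 − (1/λ_RD)·∫_{θ₁}^{∞} exp( −(δ−1)/(ν(x)·λ_SR) − x/λ_RD ) dx. -/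
/-!
Given `W = w > 0`, clearing the positive denominators turns the outage event into the linear
threshold `X * ν w < δ - 1`. Multiplying `ν w` by its positive denominator leaves a quadratic in
`w` whose positive root is `θ₁`, so `ν w > 0` exactly when `w > θ₁`. The secure event therefore has
conditional probability `exp (-(δ - 1) / (ν w * λ_SR))` for `w > θ₁` and `0` otherwise, and by
independence its probability is the integral of this against the density of `W`.
-/

open MeasureTheory ProbabilityTheory Real Set
open scoped ENNReal

section Exponential

variable {r t : ℝ}

instance (r : ℝ) : NullSingletonClass (expMeasure r) :=
  inferInstanceAs (NullSingletonClass (volume.withDensity _))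

lemma expMeasure_Ioi (hr : 0 < r) (ht : 0 ≤ t) :
    expMeasure r (Ioi t) = ENNReal.ofReal (exp (-(r * t))) := by
  have := isProbabilityMeasure_expMeasure hr
  rw [← compl_Iic, prob_compl_eq_one_sub measurableSet_Iic, ← ofReal_cdf, cdf_expMeasure_eq hr,
    if_pos ht, ← ENNReal.ofReal_one, ← ENNReal.ofReal_sub _ (by simpa using mul_nonneg hr.le ht)]
  ring_nf

lemma expMeasure_Ici (hr : 0 < r) (ht : 0 ≤ t) :
    expMeasure r (Ici t) = ENNReal.ofReal (exp (-(r * t))) := by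
  rw [← measure_congr Ioi_ae_eq_Ici, expMeasure_Ioi hr ht]

lemma ae_pos_expMeasure (hr : 0 < r) : ∀ᵐ x ∂expMeasure r, 0 < x := by
  have := isProbabilityMeasure_expMeasure hr
  have hIic : {x : ℝ | ¬ 0 < x} = Iic 0 := by ext; simp
  rw [ae_iff, hIic, ← ofReal_cdf, cdf_expMeasure_eq hr, if_pos le_rfl]
  simp

lemma expMeasure_setOf_le_mul {d c : ℝ} (hr : 0 < r) (hd : 0 < d) :
    expMeasure r {x | d ≤ x * c} = if 0 < c then ENNReal.ofReal (exp (-(r * (d / c)))) else 0 := by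
  split_ifs with hc
  · rw [← expMeasure_Ici hr (div_pos hd hc).le]
    congr 1; ext x; simp [div_le_iff₀ hc]
  · refine measure_mono_null (fun x hx => ?_) (ae_iff.mp (ae_pos_expMeasure hr))
    simp only [mem_ofPred_eq] at hx ⊢
    nlinarith

lemma toReal_setLIntegral_expMeasure (hr : 0 < r) (ht : 0 ≤ t) {f : ℝ → ℝ} (hf : Measurable f)
    (hf0 : ∀ x, 0 ≤ f x) :
    (∫⁻ x in Ioi t, ENNReal.ofReal (f x) ∂expMeasure r).toReal =
      r * ∫ x in Ioi t, f x * exp (-(r * x)) := by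
  have hpdf : ∀ x ∈ Ioi t, (exponentialPDF r * fun x => ENNReal.ofReal (f x)) x =
      ENNReal.ofReal (r * (f x * exp (-(r * x)))) := fun x hx => by
    rw [Pi.mul_apply, exponentialPDF_of_nonneg (ht.trans (le_of_lt hx)),
      ← ENNReal.ofReal_mul (by positivity)]
    ring_nf
  have hexp : expMeasure r = volume.withDensity (exponentialPDF r) := rfl
  have hpdf_meas : Measurable (exponentialPDF r) :=
    (measurable_exponentialPDFReal r).ennreal_ofReal
  rw [hexp, setLIntegral_withDensity_eq_setLIntegral_mul _ hpdf_meas hf.ennreal_ofReal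
      measurableSet_Ioi, setLIntegral_congr_fun measurableSet_Ioi hpdf,
    ← integral_eq_lintegral_of_nonneg_ae (ae_of_all _ fun x => by have := hf0 x; positivity)
      (by fun_prop), integral_const_mul]

end Exponential

lemma measure_preimage_prodMk_eq_lintegral {Ω α β : Type*} [MeasurableSpace Ω]
    [MeasurableSpace α] [MeasurableSpace β] {μ : Measure Ω} [IsFiniteMeasure μ]
    {X : Ω → α} {Y : Ω → β} (hX : Measurable X) (hY : Measurable Y) (hXY : IndepFun X Y μ)
    {T : Set (α × β)} (hT : MeasurableSet T) :
    μ ((fun ω => (X ω, Y ω)) ⁻¹' T) = ∫⁻ x, μ.map Y (Prod.mk x ⁻¹' T) ∂μ.map X := by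
  rw [← Measure.map_apply (hX.prodMk hY) hT,
    (indepFun_iff_map_prod_eq_prod_map_map hX.aemeasurable hY.aemeasurable).mp hXY,
    Measure.prod_apply hT]

lemma quadratic_pos_iff_of_nonneg {a b c u : ℝ} (ha : 0 < a) (hc : 0 < c) (hu : 0 ≤ u) :
    0 < a ^ 2 * u ^ 2 - a * b * u - c ↔ (b + √(b ^ 2 + 4 * c)) / (2 * a) < u := by
  set s := √(b ^ 2 + 4 * c)
  have hs : s ^ 2 = b ^ 2 + 4 * c := sq_sqrt (by positivity)
  have hbs : |b| < s := abs_lt_of_sq_lt_sq (by linarith) (sqrt_nonneg _)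
  have hfactor :
      a ^ 2 * u ^ 2 - a * b * u - c = (2 * a * u - b - s) * (2 * a * u - b + s) / 4 := by
    linear_combination hs / 4
  have hroot_gap : 0 < 2 * a * u - b + s := by
    nlinarith [neg_abs_le b, mul_nonneg ha.le hu]
  rw [hfactor, div_lt_iff₀ (by positivity), div_pos_iff_of_pos_right (by norm_num),
    mul_pos_iff_of_pos_right hroot_gap]
  constructor <;> intro h <;> linarith

section TimeSwitching

variable {P N0 η α δ : ℝ}

noncomputable def tsSecrecyRatio (P N0 η α x w : ℝ) : ℝ :=
  (1 + 2 * η * α * P * x * w / (N0 * (2 * η * α * w + (1 - α)))) / (1 + P * x / (P * w + N0))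

noncomputable def tsNu (P N0 η α δ w : ℝ) : ℝ :=
  2 * η * α * P * w / (N0 * (2 * η * α * w + (1 - α))) - P * δ / (P * w + N0)

noncomputable def tsTheta1 (P N0 η α δ : ℝ) : ℝ :=
  ((δ - 1) + √((δ - 1) ^ 2 + 4 * δ * (P * (1 - α) / (2 * η * α * N0)))) / (2 * (P / N0))

lemma tsSecrecyRatio_lt_iff (hP : 0 < P) (hN0 : 0 < N0) (hη : 0 < η) (hα0 : 0 < α) (hα1 : α < 1)
    {x w : ℝ} (hx : 0 ≤ x) (hw : 0 ≤ w) :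
    tsSecrecyRatio P N0 η α x w < δ ↔ x * tsNu P N0 η α δ w < δ - 1 := by
  have hD₁ : 0 < 2 * η * α * w + (1 - α) := by
    have := mul_nonneg (by positivity : 0 ≤ 2 * η * α) hw; linarith
  have hD₂ : 0 < P * w + N0 := by positivity
  have hratio : tsSecrecyRatio P N0 η α x w - δ =
      (x * tsNu P N0 η α δ w - (δ - 1)) / (1 + P * x / (P * w + N0)) := by
    unfold tsSecrecyRatio tsNu
    field_simp
    ring
  rw [← sub_neg, hratio, div_lt_iff₀ (by positivity), zero_mul, sub_neg]

lemma tsNu_pos_iff (hP : 0 < P) (hN0 : 0 < N0) (hη : 0 < η) (hα0 : 0 < α) (hα1 : α < 1)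
    (hδ : 0 < δ) {w : ℝ} (hw : 0 ≤ w) :
    0 < tsNu P N0 η α δ w ↔ tsTheta1 P N0 η α δ < w := by
  have hD₁ : 0 < 2 * η * α * w + (1 - α) := by
    have := mul_nonneg (by positivity : 0 ≤ 2 * η * α) hw; linarith
  have hD₂ : 0 < P * w + N0 := by positivity
  have hquad : tsNu P N0 η α δ w = 2 * η * α * N0 ^ 2 * ((P / N0) ^ 2 * w ^ 2
      - (P / N0) * (δ - 1) * w - δ * (P * (1 - α) / (2 * η * α * N0))) /
        (N0 * (2 * η * α * w + (1 - α)) * (P * w + N0)) := by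
    unfold tsNu
    field_simp
    ring
  have hconst : 0 < δ * (P * (1 - α) / (2 * η * α * N0)) :=
    mul_pos hδ (div_pos (mul_pos hP (sub_pos.2 hα1)) (by positivity))
  rw [hquad, div_pos_iff_of_pos_right (by positivity), mul_pos_iff_of_pos_left (by positivity),
    quadratic_pos_iff_of_nonneg (div_pos hP hN0) hconst hw, tsTheta1, mul_assoc 4]

lemma expMeasure_compl_setOf_tsSecrecyRatio_lt {r : ℝ} (hr : 0 < r) (hP : 0 < P) (hN0 : 0 < N0)
    (hη : 0 < η) (hα0 : 0 < α) (hα1 : α < 1) (hδ : 1 < δ) {w : ℝ} (hw : 0 ≤ w) :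
    expMeasure r {x | tsSecrecyRatio P N0 η α x w < δ}ᶜ =
      (Ioi (tsTheta1 P N0 η α δ)).indicator
        (fun w => ENNReal.ofReal (exp (-(r * ((δ - 1) / tsNu P N0 η α δ w))))) w := by
  have hslice : ({x | tsSecrecyRatio P N0 η α x w < δ}ᶜ : Set ℝ) =ᵐ[expMeasure r]
      {x | δ - 1 ≤ x * tsNu P N0 η α δ w} := by
    rw [Filter.eventuallyEq_set]
    filter_upwards [ae_pos_expMeasure hr] with x hx
    simp only [mem_compl_iff, mem_ofPred_eq, not_lt.symm,
      tsSecrecyRatio_lt_iff hP hN0 hη hα0 hα1 hx.le hw]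
  rw [measure_congr hslice, expMeasure_setOf_le_mul hr (sub_pos.2 hδ), indicator_apply]
  simp only [mem_Ioi, tsNu_pos_iff hP hN0 hη hα0 hα1 (zero_lt_one.trans hδ) hw]

end TimeSwitching

theorem secrecy_outage_TS_general
    {Ω : Type*} [MeasurableSpace Ω] (μ : Measure Ω) [IsProbabilityMeasure μ]
    (X W : Ω → ℝ) (hXm : Measurable X) (hWm : Measurable W)
    (hindep : IndepFun X W μ)
    (lamSR lamRD : ℝ) (hlamSR : 0 < lamSR) (hlamRD : 0 < lamRD)
    (hX : Measure.map X μ = expMeasure lamSR⁻¹)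
    (hW : Measure.map W μ = expMeasure lamRD⁻¹)
    (P N0 η α δ : ℝ) (hP : 0 < P) (hN0 : 0 < N0)
    (hη0 : 0 < η) (hα0 : 0 < α) (hα1 : α < 1) (hδ : 1 < δ)
    (ν : ℝ → ℝ)
    (hν : ∀ x, ν x = 2 * η * α * P * x / (N0 * (2 * η * α * x + (1 - α)))
        - P * δ / (P * x + N0))
    (θ1 : ℝ)
    (hθ1 : θ1 = ((δ - 1)
        + Real.sqrt ((δ - 1) ^ 2 + 4 * δ * (P * (1 - α) / (2 * η * α * N0)))) /
        (2 * (P / N0))) :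
    (μ {ω | (1 + 2 * η * α * P * X ω * W ω / (N0 * (2 * η * α * W ω + (1 - α)))) /
        (1 + P * X ω / (P * W ω + N0)) < δ}).toReal =
      1 - (1 / lamRD) * ∫ x in Set.Ioi θ1,
        Real.exp (-(δ - 1) / (ν x * lamSR) - x / lamRD) := by
  obtain rfl : ν = tsNu P N0 η α δ := funext hν
  obtain rfl : θ1 = tsTheta1 P N0 η α δ := hθ1
  have hθ1_nonneg : 0 ≤ tsTheta1 P N0 η α δ :=
    div_nonneg (add_nonneg (sub_nonneg.2 hδ.le) (sqrt_nonneg _)) (by positivity)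
  set T := {p : ℝ × ℝ | tsSecrecyRatio P N0 η α p.2 p.1 < δ}
  have hT : MeasurableSet T :=
    measurableSet_lt (by unfold tsSecrecyRatio; fun_prop) measurable_const
  have hslices : ∫⁻ w, expMeasure lamSR⁻¹ (Prod.mk w ⁻¹' Tᶜ) ∂expMeasure lamRD⁻¹ =
      ∫⁻ w in Ioi (tsTheta1 P N0 η α δ), ENNReal.ofReal
        (exp (-(lamSR⁻¹ * ((δ - 1) / tsNu P N0 η α δ w)))) ∂expMeasure lamRD⁻¹ := by
    rw [← lintegral_indicator measurableSet_Ioi]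
    refine lintegral_congr_ae ?_
    filter_upwards [ae_pos_expMeasure (inv_pos.2 hlamRD)] with w hw
    exact expMeasure_compl_setOf_tsSecrecyRatio_lt (inv_pos.2 hlamSR) hP hN0 hη0 hα0 hα1 hδ hw.le
  have hsecure : μ.real ((fun ω => (W ω, X ω)) ⁻¹' Tᶜ) =
      lamRD⁻¹ * ∫ x in Ioi (tsTheta1 P N0 η α δ),
        exp (-(δ - 1) / (tsNu P N0 η α δ x * lamSR) - x / lamRD) := by
    rw [measureReal_def, measure_preimage_prodMk_eq_lintegral hWm hXm hindep.symm hT.compl, hW, hX,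
      hslices, toReal_setLIntegral_expMeasure (inv_pos.2 hlamRD) hθ1_nonneg
        (by unfold tsNu; fun_prop) (fun _ => (exp_pos _).le)]
    congr 1
    refine integral_congr_ae (ae_of_all _ fun x => ?_)
    simp only [← exp_add]
    ring_nf
  show μ.real ((fun ω => (W ω, X ω)) ⁻¹' T) = _
  rw [one_div, ← hsecure, preimage_compl, probReal_compl_eq_one_sub ((hWm.prodMk hXm) hT),
    sub_sub_cancel]

/-- **Secrecy outage probability of the TS policy (Proposition 5).** The high-SNR secrecy
outage probability equals `1 - (1/λ_RD) ∫_{θ₁}^∞ exp(-(δ-1)/(ν(x) λ_SR) - x/λ_RD) dx`. -/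
theorem secrecy_outage_TS
    {Ω : Type*} [MeasurableSpace Ω] (μ : Measure Ω) [IsProbabilityMeasure μ]
    (X W : Ω → ℝ) (hXm : Measurable X) (hWm : Measurable W)
    (hindep : IndepFun X W μ)
    (lamSR lamRD : ℝ) (hlamSR : 0 < lamSR) (hlamRD : 0 < lamRD)
    (hX : Measure.map X μ = expMeasure lamSR⁻¹)
    (hW : Measure.map W μ = expMeasure lamRD⁻¹)
    (P N0 η α δ : ℝ) (hP : 0 < P) (hN0 : 0 < N0)
    (hη0 : 0 < η) (hη1 : η ≤ 1) (hα0 : 0 < α) (hα1 : α < 1) (hδ : 1 < δ)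
    (ν : ℝ → ℝ)
    (hν : ∀ x, ν x = 2 * η * α * P * x / (N0 * (2 * η * α * x + (1 - α)))
        - P * δ / (P * x + N0))
    (θ1 : ℝ)
    (hθ1 : θ1 = ((δ - 1)
        + Real.sqrt ((δ - 1) ^ 2 + 4 * δ * (P * (1 - α) / (2 * η * α * N0)))) /
        (2 * (P / N0))) :
    (μ {ω | (1 + 2 * η * α * P * X ω * W ω / (N0 * (2 * η * α * W ω + (1 - α)))) /
        (1 + P * X ω / (P * W ω + N0)) < δ}).toReal =
      1 - (1 / lamRD) * ∫ x in Set.Ioi θ1,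
        Real.exp (-(δ - 1) / (ν x * lamSR) - x / lamRD) :=
  secrecy_outage_TS_general μ X W hXm hWm hindep lamSR lamRD hlamSR hlamRD hX hW P N0 η α δ hP hN0
    hη0 hα0 hα1 hδ ν hν θ1 hθ1
end
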